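/- Modal companion theorem for contraposition logic: For every formula φ of the language L, CoPC ⊢ φ if and only if CoS4 ⊢ φ^□. -/

import Mathlib

inductive Form : Type
  | var : ℕ → Form
  | top : Form
  | and : Form → Form → Form
  | or : Form → Form → Form
  | imp : Form → Form → Form
  | neg : Form → Form

def Form.iff (φ ψ : Form) : Form := (φ.imp ψ).and (ψ.imp φ)

inductive Deriv (Ax : Form → Prop) : Form → Prop
  | ax : ∀ {φ : Form}, Ax φ → Deriv Ax φ
  | imp1 : ∀ φ ψ : Form, Deriv Ax (φ.imp (ψ.imp φ))
  | imp2 : ∀ φ ψ χ : Form, Deriv Ax ((φ.imp (ψ.imp χ)).imp ((φ.imp ψ).imp (φ.imp χ)))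
  | topI : Deriv Ax Form.top
  | andE1 : ∀ φ ψ : Form, Deriv Ax ((φ.and ψ).imp φ)
  | andE2 : ∀ φ ψ : Form, Deriv Ax ((φ.and ψ).imp ψ)
  | andI : ∀ φ ψ : Form, Deriv Ax (φ.imp (ψ.imp (φ.and ψ)))
  | orI1 : ∀ φ ψ : Form, Deriv Ax (φ.imp (φ.or ψ))
  | orI2 : ∀ φ ψ : Form, Deriv Ax (ψ.imp (φ.or ψ))
  | orE : ∀ φ ψ χ : Form, Deriv Ax ((φ.imp χ).imp ((ψ.imp χ).imp ((φ.or ψ).imp χ)))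
  | negAx : ∀ φ ψ : Form, Deriv Ax ((Form.iff φ ψ).imp (Form.iff φ.neg ψ.neg))
  | mp : ∀ {φ ψ : Form}, Deriv Ax (φ.imp ψ) → Deriv Ax φ → Deriv Ax ψ

def NThm : Form → Prop := Deriv fun _ => False

def NeFThm : Form → Prop := Deriv fun χ => ∃ φ ψ : Form, χ = (φ.and φ.neg).imp ψ.neg

def CoPCThm : Form → Prop := Deriv fun χ => ∃ φ ψ : Form, χ = (φ.imp ψ).imp (ψ.neg.imp φ.neg)

def MPCThm : Form → Prop := Deriv fun χ => ∃ φ : Form, χ = (φ.imp φ.neg).imp φ.neg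

inductive MForm : Type
  | var : ℕ → MForm
  | bot : MForm
  | top : MForm
  | and : MForm → MForm → MForm
  | or : MForm → MForm → MForm
  | imp : MForm → MForm → MForm
  | box : MForm → MForm
  | bbox : MForm → MForm

def MForm.miff (φ ψ : MForm) : MForm := (φ.imp ψ).and (ψ.imp φ)

def MTaut (φ : MForm) : Prop :=
  ∀ v : MForm → Bool,
    v MForm.bot = false → v MForm.top = true →
    (∀ a b : MForm, v (a.and b) = (v a && v b)) →
    (∀ a b : MForm, v (a.or b) = (v a || v b)) →
    (∀ a b : MForm, v (a.imp b) = (!(v a) || v b)) →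
    v φ = true

inductive NS4 : MForm → Prop
  | taut : ∀ {φ : MForm}, MTaut φ → NS4 φ
  | axK : ∀ φ ψ : MForm, NS4 (((φ.imp ψ).box).imp ((φ.box).imp (ψ.box)))
  | axT : ∀ φ : MForm, NS4 ((φ.box).imp φ)
  | ax4 : ∀ φ : MForm, NS4 ((φ.box).imp (φ.box.box))
  | axN : ∀ φ ψ : MForm, NS4 (((φ.miff ψ).box).imp ((φ.bbox).miff (ψ.bbox)))
  | axB : ∀ φ : MForm, NS4 ((φ.bbox).imp (φ.bbox.box))
  | mp : ∀ {φ ψ : MForm}, NS4 (φ.imp ψ) → NS4 φ → NS4 ψ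
  | nec : ∀ {φ : MForm}, NS4 φ → NS4 (φ.box)

def MSat {W : Type*} (le : W → W → Prop) (N : Set W → Set W) (V : ℕ → Set W) : MForm → Set W
  | .var p => V p
  | .bot => ∅
  | .top => Set.univ
  | .and φ ψ => MSat le N V φ ∩ MSat le N V ψ
  | .or φ ψ => MSat le N V φ ∪ MSat le N V ψ
  | .imp φ ψ => {w | w ∈ MSat le N V φ → w ∈ MSat le N V ψ}
  | .box φ => {w | ∀ v, le w v → v ∈ MSat le N V φ}
  | .bbox φ => N (MSat le N V φ)

def godelT : Form → MForm
  | .var p => (MForm.var p).box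
  | .top => MForm.top
  | .and φ ψ => (godelT φ).and (godelT ψ)
  | .or φ ψ => (godelT φ).or (godelT ψ)
  | .imp φ ψ => ((godelT φ).imp (godelT ψ)).box
  | .neg φ => (godelT φ).bbox

/-- The bi-modal system `CoS4`: `S4` for `□` together with
`□(φ → ψ) → (■ψ → ■φ)` and `■φ → □■φ`. -/
inductive CoS4 : MForm → Prop
  | taut : ∀ {φ : MForm}, MTaut φ → CoS4 φ
  | axK : ∀ φ ψ : MForm, CoS4 (((φ.imp ψ).box).imp ((φ.box).imp (ψ.box)))
  | axT : ∀ φ : MForm, CoS4 ((φ.box).imp φ)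
  | ax4 : ∀ φ : MForm, CoS4 ((φ.box).imp (φ.box.box))
  | axCo : ∀ φ ψ : MForm, CoS4 (((φ.imp ψ).box).imp ((ψ.bbox).imp (φ.bbox)))
  | axB : ∀ φ : MForm, CoS4 ((φ.bbox).imp (φ.bbox.box))
  | mp : ∀ {φ ψ : MForm}, CoS4 (φ.imp ψ) → CoS4 φ → CoS4 ψ
  | nec : ∀ {φ : MForm}, CoS4 φ → CoS4 (φ.box)

/-!
Soundness of the translation is a derivation in `CoS4` by induction on `CoPC` proofs; the point
is that translations are stable, `φ^□ → □φ^□`, which for negations is the axiom `■φ → □■φ`.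

Faithfulness goes through the canonical model of `CoPC`: worlds are prime theories ordered by
inclusion, `□` is interpreted along the order and `■` by the neighbourhood map `canonicalNeg`.
This frame validates `CoS4`, and thanks to the contraposition axiom the truth set of `φ^□` is
exactly the set of prime theories containing `φ`. By Lindenbaum's lemma a non-theorem is missed
by some prime theory, hence its translation is refuted.
-/

namespace MTaut

variable (a b c d e : MForm)

theorem top : MTaut MForm.top := fun _ _ h _ _ _ => h

theorem imp_intro : MTaut (a.imp (b.imp a)) := by
  intro v _ _ _ _ _; simp only [*]; grind

theorem imp_trans : MTaut ((a.imp b).imp ((b.imp c).imp (a.imp c))) := by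
  intro v _ _ _ _ _; simp only [*]; grind

theorem imp_imp₂ :
    MTaut ((b.imp (c.imp d)).imp ((a.imp b).imp ((a.imp c).imp (a.imp d)))) := by
  intro v _ _ _ _ _; simp only [*]; grind

theorem and_left : MTaut ((a.and b).imp a) := by
  intro v _ _ _ _ _; simp only [*]; grind

theorem and_right : MTaut ((a.and b).imp b) := by
  intro v _ _ _ _ _; simp only [*]; grind

theorem and_intro : MTaut (a.imp (b.imp (a.and b))) := by
  intro v _ _ _ _ _; simp only [*]; grind

theorem and_imp_of_imp :
    MTaut ((a.imp c).imp ((b.imp d).imp ((c.imp (d.imp e)).imp ((a.and b).imp e)))) := by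
  intro v _ _ _ _ _; simp only [*]; grind

theorem and_imp_and_swap : MTaut ((b.imp c).imp ((a.imp d).imp ((a.and b).imp (c.and d)))) := by
  intro v _ _ _ _ _; simp only [*]; grind

theorem or_inl : MTaut (a.imp (a.or b)) := by
  intro v _ _ _ _ _; simp only [*]; grind

theorem or_inr : MTaut (b.imp (a.or b)) := by
  intro v _ _ _ _ _; simp only [*]; grind

theorem or_elim : MTaut ((a.imp c).imp ((b.imp c).imp ((a.or b).imp c))) := by
  intro v _ _ _ _ _; simp only [*]; grind

end MTaut

namespace CoS4

variable {a b c : MForm}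

theorem taut_mp (t : MTaut (a.imp b)) (h : CoS4 a) : CoS4 b :=
  mp (taut t) h

theorem taut_mp₂ (t : MTaut (a.imp (b.imp c))) (h₁ : CoS4 a) (h₂ : CoS4 b) : CoS4 c :=
  mp (mp (taut t) h₁) h₂

theorem imp_trans (h₁ : CoS4 (a.imp b)) (h₂ : CoS4 (b.imp c)) : CoS4 (a.imp c) :=
  taut_mp₂ (.imp_trans a b c) h₁ h₂

theorem box_mono (h : CoS4 (a.imp b)) : CoS4 (a.box.imp b.box) :=
  mp (axK a b) (nec h)

theorem box_mono₂ (h : CoS4 (a.imp (b.imp c))) : CoS4 (a.box.imp (b.box.imp c.box)) :=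
  imp_trans (box_mono h) (axK b c)

theorem box_imp_box_of_box_imp (h : CoS4 (a.box.imp b)) : CoS4 (a.box.imp b.box) :=
  imp_trans (ax4 a) (box_mono h)

theorem godelT_imp_box (φ : Form) : CoS4 ((godelT φ).imp (godelT φ).box) := by
  induction φ with
  | var p => exact ax4 _
  | top => exact taut_mp (.imp_intro _ _) (nec (taut .top))
  | and φ ψ ih₁ ih₂ =>
    exact mp (taut_mp₂ (.and_imp_of_imp _ _ _ _ _) ih₁ ih₂)
      (box_mono₂ (taut (.and_intro (godelT φ) (godelT ψ))))
  | or φ ψ ih₁ ih₂ =>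
    exact taut_mp₂ (.or_elim _ _ _)
      (imp_trans ih₁ (box_mono (taut (.or_inl _ _))))
      (imp_trans ih₂ (box_mono (taut (.or_inr _ _))))
  | imp φ ψ _ _ => exact ax4 _
  | neg φ _ => exact axB _

theorem godelT_of_copcThm {φ : Form} (h : CoPCThm φ) : CoS4 (godelT φ) := by
  induction h with
  | ax hax =>
    obtain ⟨φ, ψ, rfl⟩ := hax
    exact nec (box_imp_box_of_box_imp (axCo _ _))
  | imp1 φ ψ => exact nec (imp_trans (godelT_imp_box φ) (box_mono (taut (.imp_intro _ _))))
  | imp2 φ ψ χ =>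
    have hdist : CoS4 (((godelT φ).imp ((godelT ψ).imp (godelT χ)).box).imp
        (((godelT φ).imp (godelT ψ)).imp ((godelT φ).imp (godelT χ)))) :=
      taut_mp (.imp_imp₂ _ _ _ _) (axT ((godelT ψ).imp (godelT χ)))
    exact nec (box_imp_box_of_box_imp (box_mono₂ hdist))
  | topI => exact taut .top
  | andE1 => exact nec (taut (.and_left _ _))
  | andE2 => exact nec (taut (.and_right _ _))
  | andI φ ψ => exact nec (imp_trans (godelT_imp_box φ) (box_mono (taut (.and_intro _ _))))
  | orI1 => exact nec (taut (.or_inl _ _))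
  | orI2 => exact nec (taut (.or_inr _ _))
  | orE => exact nec (box_imp_box_of_box_imp (box_mono₂ (taut (.or_elim _ _ _))))
  | negAx φ ψ =>
    exact nec (taut_mp₂ (.and_imp_and_swap _ _ _ _)
      (box_imp_box_of_box_imp (axCo (godelT ψ) (godelT φ)))
      (box_imp_box_of_box_imp (axCo (godelT φ) (godelT ψ))))
  | mp _ _ ih₁ ih₂ => exact mp (mp (axT _) ih₁) ih₂

end CoS4

theorem Deriv.imp_self {Ax : Form → Prop} (φ : Form) : Deriv Ax (φ.imp φ) :=
  mp (mp (imp2 φ (φ.imp φ) φ) (imp1 φ (φ.imp φ))) (imp1 φ φ)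

inductive DerivFrom (Ax : Form → Prop) (Γ : Set Form) : Form → Prop
  | of_deriv {φ : Form} : Deriv Ax φ → DerivFrom Ax Γ φ
  | hyp {φ : Form} : φ ∈ Γ → DerivFrom Ax Γ φ
  | mp {φ ψ : Form} : DerivFrom Ax Γ (φ.imp ψ) → DerivFrom Ax Γ φ → DerivFrom Ax Γ ψ

namespace DerivFrom

variable {Ax : Form → Prop} {Γ Δ : Set Form} {φ ψ : Form}

theorem mono (hΓΔ : Γ ⊆ Δ) (h : DerivFrom Ax Γ φ) : DerivFrom Ax Δ φ := by
  induction h with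
  | of_deriv h => exact of_deriv h
  | hyp h => exact hyp (hΓΔ h)
  | mp _ _ ih₁ ih₂ => exact mp ih₁ ih₂

theorem deriv_of_empty (h : DerivFrom Ax ∅ φ) : Deriv Ax φ := by
  induction h with
  | of_deriv h => exact h
  | hyp h => exact absurd h (Set.notMem_empty _)
  | mp _ _ ih₁ ih₂ => exact Deriv.mp ih₁ ih₂

theorem mp_deriv (h : Deriv Ax (φ.imp ψ)) (hφ : DerivFrom Ax Γ φ) : DerivFrom Ax Γ ψ :=
  mp (of_deriv h) hφ

theorem deduction (h : DerivFrom Ax (insert ψ Γ) φ) : DerivFrom Ax Γ (ψ.imp φ) := by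
  induction h with
  | of_deriv h => exact mp_deriv (Deriv.imp1 _ ψ) (of_deriv h)
  | hyp h =>
    rcases h with rfl | h
    · exact of_deriv (Deriv.imp_self _)
    · exact mp_deriv (Deriv.imp1 _ ψ) (hyp h)
  | mp _ _ ih₁ ih₂ => exact mp (mp_deriv (Deriv.imp2 _ _ _) ih₁) ih₂

theorem cut (hψ : DerivFrom Ax Γ ψ) (h : DerivFrom Ax (insert ψ Γ) φ) : DerivFrom Ax Γ φ :=
  mp (deduction h) hψ

theorem exists_mem_of_sUnion {c : Set (Set Form)} (hc : IsChain (· ⊆ ·) c) (hne : c.Nonempty)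
    (h : DerivFrom Ax (⋃₀ c) φ) : ∃ Δ ∈ c, DerivFrom Ax Δ φ := by
  induction h with
  | of_deriv h => exact ⟨hne.some, hne.some_mem, of_deriv h⟩
  | hyp h =>
    obtain ⟨Δ, hΔ, hφ⟩ := h
    exact ⟨Δ, hΔ, hyp hφ⟩
  | mp _ _ ih₁ ih₂ =>
    obtain ⟨Δ₁, hΔ₁, h₁⟩ := ih₁
    obtain ⟨Δ₂, hΔ₂, h₂⟩ := ih₂
    rcases hc.total hΔ₁ hΔ₂ with h₁₂ | h₂₁
    · exact ⟨Δ₂, hΔ₂, mp (h₁.mono h₁₂) h₂⟩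
    · exact ⟨Δ₁, hΔ₁, mp h₁ (h₂.mono h₂₁)⟩

end DerivFrom

structure IsPrimeTheory (Ax : Form → Prop) (Γ : Set Form) : Prop where
  mem_of_derivFrom : ∀ {φ : Form}, DerivFrom Ax Γ φ → φ ∈ Γ
  mem_or_mem : ∀ {φ ψ : Form}, φ.or ψ ∈ Γ → φ ∈ Γ ∨ ψ ∈ Γ

namespace IsPrimeTheory

variable {Ax : Form → Prop} {Γ : Set Form} {φ ψ : Form}

theorem mem_of_deriv (hΓ : IsPrimeTheory Ax Γ) (h : Deriv Ax φ) : φ ∈ Γ :=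
  hΓ.mem_of_derivFrom (.of_deriv h)

theorem mem_of_deriv_imp (hΓ : IsPrimeTheory Ax Γ) (h : Deriv Ax (φ.imp ψ)) (hφ : φ ∈ Γ) :
    ψ ∈ Γ :=
  hΓ.mem_of_derivFrom (.mp_deriv h (.hyp hφ))

theorem mem_of_imp_mem (hΓ : IsPrimeTheory Ax Γ) (h : φ.imp ψ ∈ Γ) (hφ : φ ∈ Γ) : ψ ∈ Γ :=
  hΓ.mem_of_derivFrom (.mp (.hyp h) (.hyp hφ))

theorem of_maximal {M : Set Form} (hM : Maximal (fun Δ => ¬ DerivFrom Ax Δ φ) M) :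
    IsPrimeTheory Ax M := by
  have derivFrom_insert : ∀ {ψ}, ψ ∉ M → DerivFrom Ax (insert ψ M) φ := fun hψ => by
    by_contra h
    exact hψ (hM.2 h (Set.subset_insert _ _) (Set.mem_insert _ _))
  refine ⟨fun {ψ} hψ => ?_, fun {ψ χ} hψχ => ?_⟩
  · by_contra hψM
    exact hM.1 (hψ.cut (derivFrom_insert hψM))
  · by_contra! h
    exact hM.1 (.mp (.mp (.mp_deriv (Deriv.orE ψ χ φ) (derivFrom_insert h.1).deduction)
      (derivFrom_insert h.2).deduction) (.hyp hψχ))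

end IsPrimeTheory

theorem exists_isPrimeTheory_of_not_derivFrom {Ax : Form → Prop} {Γ : Set Form} {φ : Form}
    (h : ¬ DerivFrom Ax Γ φ) : ∃ Δ, Γ ⊆ Δ ∧ IsPrimeTheory Ax Δ ∧ φ ∉ Δ := by
  obtain ⟨M, hΓM, hM⟩ := zorn_subset_nonempty {Δ | ¬ DerivFrom Ax Δ φ}
    (fun c hcS hc hne => ⟨⋃₀ c, fun hφ => by
      obtain ⟨Δ, hΔ, hφ⟩ := DerivFrom.exists_mem_of_sUnion hc hne hφ
      exact hcS hΔ hφ, fun _ => Set.subset_sUnion_of_mem⟩) Γ h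
  exact ⟨M, hΓM, .of_maximal hM, fun hφ => hM.1 (.hyp hφ)⟩

theorem IsPrimeTheory.imp_mem {Ax : Form → Prop} {Γ : Set Form} {φ ψ : Form}
    (hΓ : IsPrimeTheory Ax Γ)
    (h : ∀ Δ, IsPrimeTheory Ax Δ → Γ ⊆ Δ → φ ∈ Δ → ψ ∈ Δ) : φ.imp ψ ∈ Γ := by
  by_contra hφψ
  have hψ : ¬ DerivFrom Ax (insert φ Γ) ψ := fun h' => hφψ (hΓ.mem_of_derivFrom h'.deduction)
  obtain ⟨Δ, hΓΔ, hΔ, hψ⟩ := exists_isPrimeTheory_of_not_derivFrom hψ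
  exact hψ (h Δ hΔ ((Set.subset_insert _ _).trans hΓΔ) (hΓΔ (Set.mem_insert _ _)))

theorem MTaut.mem_mSat {W : Type*} {le : W → W → Prop} {N : Set W → Set W} {V : ℕ → Set W}
    {φ : MForm} (h : MTaut φ) (w : W) : w ∈ MSat le N V φ := by
  classical
  simpa using h (fun χ => decide (w ∈ MSat le N V χ)) (by simp [MSat]) (by simp [MSat])
    (by simp [MSat]) (by simp [MSat]) (by simp [MSat, imp_iff_not_or])

theorem CoS4.mem_mSat {W : Type*} [Preorder W] {N : Set W → Set W}
    (hN_anti : ∀ A B w, Set.Ici w ∩ A ⊆ B → w ∈ N B → w ∈ N A)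
    (hN_up : ∀ A, IsUpperSet (N A)) (V : ℕ → Set W) {φ : MForm} (h : CoS4 φ) (w : W) :
    w ∈ MSat (· ≤ ·) N V φ := by
  induction h generalizing w with
  | taut h => exact h.mem_mSat w
  | axK φ ψ => exact fun hφψ hφ v hwv => hφψ v hwv (hφ v hwv)
  | axT φ => exact fun hφ => hφ w le_rfl
  | ax4 φ => exact fun hφ u hwu v huv => hφ v (hwu.trans huv)
  | axCo φ ψ => exact fun hφψ => hN_anti _ _ w fun v ⟨hwv, hφ⟩ => hφψ v hwv hφ
  | axB φ => exact fun hφ v hwv => hN_up _ hwv hφ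
  | mp _ _ ih₁ ih₂ => exact ih₁ w (ih₂ w)
  | nec _ ih => exact fun v _ => ih v

def CoPCAx (χ : Form) : Prop := ∃ φ ψ : Form, χ = (φ.imp ψ).imp (ψ.neg.imp φ.neg)

abbrev PrimeTheory : Type := {Γ : Set Form // IsPrimeTheory CoPCAx Γ}

def canonicalVal (p : ℕ) : Set PrimeTheory := {Γ | Form.var p ∈ Γ.1}

-- Chosen so that, by contraposition, `canonicalNeg {Δ | φ ∈ Δ.1} = {Γ | φ.neg ∈ Γ.1}`.
def canonicalNeg (A : Set PrimeTheory) : Set PrimeTheory :=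
  {Γ | ∃ χ : Form, χ.neg ∈ Γ.1 ∧ Set.Ici Γ ∩ A ⊆ {Δ | χ ∈ Δ.1}}

theorem canonicalNeg_anti {A B : Set PrimeTheory} {Γ : PrimeTheory} (hAB : Set.Ici Γ ∩ A ⊆ B)
    (hΓ : Γ ∈ canonicalNeg B) : Γ ∈ canonicalNeg A := by
  obtain ⟨χ, hχ, hB⟩ := hΓ
  exact ⟨χ, hχ, fun Δ hΔ => hB ⟨hΔ.1, hAB hΔ⟩⟩

theorem isUpperSet_canonicalNeg (A : Set PrimeTheory) : IsUpperSet (canonicalNeg A) := by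
  rintro Γ Δ hΓΔ ⟨χ, hχ, hA⟩
  exact ⟨χ, hΓΔ hχ, fun E hE => hA ⟨hΓΔ.trans hE.1, hE.2⟩⟩

theorem mSat_canonical_godelT (φ : Form) :
    MSat (· ≤ ·) canonicalNeg canonicalVal (godelT φ) = {Γ | φ ∈ Γ.1} := by
  induction φ with
  | var p => exact Set.ext fun Γ => ⟨fun h => h Γ le_rfl, fun h Δ hΓΔ => hΓΔ h⟩
  | top => exact Set.ext fun Γ => iff_of_true trivial (Γ.2.mem_of_deriv .topI)
  | and φ ψ ih₁ ih₂ =>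
    ext Γ
    simp only [godelT, MSat, ih₁, ih₂]
    exact ⟨fun ⟨hφ, hψ⟩ => Γ.2.mem_of_imp_mem (Γ.2.mem_of_deriv_imp (.andI φ ψ) hφ) hψ,
      fun h => ⟨Γ.2.mem_of_deriv_imp (.andE1 φ ψ) h, Γ.2.mem_of_deriv_imp (.andE2 φ ψ) h⟩⟩
  | or φ ψ ih₁ ih₂ =>
    ext Γ
    simp only [godelT, MSat, ih₁, ih₂]
    exact ⟨Or.rec (Γ.2.mem_of_deriv_imp (.orI1 φ ψ)) (Γ.2.mem_of_deriv_imp (.orI2 φ ψ)),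
      Γ.2.mem_or_mem⟩
  | imp φ ψ ih₁ ih₂ =>
    ext Γ
    simp only [godelT, MSat, ih₁, ih₂]
    exact ⟨fun h => Γ.2.imp_mem fun Δ hΔ hΓΔ => h ⟨Δ, hΔ⟩ hΓΔ,
      fun h Δ hΓΔ => Δ.2.mem_of_imp_mem (hΓΔ h)⟩
  | neg φ ih =>
    ext Γ
    simp only [godelT, MSat, ih, canonicalNeg]
    refine ⟨fun ⟨χ, hχ, hχA⟩ => ?_, fun h => ⟨φ, h, fun _ hΔ => hΔ.2⟩⟩
    have hφχ : φ.imp χ ∈ Γ.1 := Γ.2.imp_mem fun Δ hΔ hΓΔ hφ => hχA (a := ⟨Δ, hΔ⟩) ⟨hΓΔ, hφ⟩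
    exact Γ.2.mem_of_imp_mem (Γ.2.mem_of_deriv_imp (.ax ⟨φ, χ, rfl⟩) hφχ) hχ

theorem CoPCThm.of_coS4_godelT {φ : Form} (h : CoS4 (godelT φ)) : CoPCThm φ := by
  by_contra hφ
  have hφ' : ¬ DerivFrom CoPCAx ∅ φ := fun h' => hφ h'.deriv_of_empty
  obtain ⟨Γ, -, hΓ, hφΓ⟩ := exists_isPrimeTheory_of_not_derivFrom hφ'
  have hsat := h.mem_mSat (fun _ _ _ => canonicalNeg_anti) isUpperSet_canonicalNeg canonicalVal
    ⟨Γ, hΓ⟩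
  rw [mSat_canonical_godelT] at hsat
  exact hφΓ hsat

/-- `CoS4` is a modal companion of contraposition logic:
`CoPC ⊢ φ` iff `CoS4 ⊢ φ^□`. -/
theorem stmt19 (φ : Form) : CoPCThm φ ↔ CoS4 (godelT φ) :=
  ⟨CoS4.godelT_of_copcThm, CoPCThm.of_coS4_godelT⟩
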